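/- Let X = ℂⁿ and Y = ℂᵐ. For unit vectors u, v ∈ X ⊗ Y, the trace norm of the partial transpose (T ⊗ I)(uv*) is at most min(n, m), with equality if and only if both u and v are maximally entangled. -/

import Mathlib

open Matrix Kronecker BigOperators ComplexOrder

noncomputable section

/-- The square root `Matrix.PosSemidef.sqrt` of the older Mathlib (removed since), with its old definition. -/
noncomputable def psdSqrt {n : Type*} [Fintype n] [DecidableEq n] {A : Matrix n n ℂ}
    (hA : A.PosSemidef) : Matrix n n ℂ :=
  hA.1.eigenvectorUnitary.1 * diagonal ((↑) ∘ (√·) ∘ hA.1.eigenvalues) *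
    (star hA.1.eigenvectorUnitary : Matrix n n ℂ)

/-- Trace norm (sum of singular values) of a complex matrix. -/
noncomputable def traceNorm {l m : Type*} [Fintype l] [Fintype m] [DecidableEq m]
    (A : Matrix l m ℂ) : ℝ :=
  ((psdSqrt (Matrix.posSemidef_conjTranspose_mul_self A)).trace).re

/-- Frobenius norm. -/
noncomputable def frobNorm {l m : Type*} [Fintype l] [Fintype m]
    (A : Matrix l m ℂ) : ℝ :=
  Real.sqrt ((Aᴴ * A).trace.re)

/-- Partial transpose on the first tensor factor. -/
def ptranspose {a b : Type*} (X : Matrix (a × b) (a × b) ℂ) : Matrix (a × b) (a × b) ℂ :=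
  Matrix.of fun p q => X (q.1, p.2) (p.1, q.2)

/-- Outer product `u v*`. -/
def outer {a : Type*} (u v : a → ℂ) : Matrix a a ℂ :=
  Matrix.of fun p q => u p * star (v q)

/-- Density operator: positive semidefinite with trace one. -/
def IsDensity {a : Type*} [Fintype a] (ρ : Matrix a a ℂ) : Prop :=
  ρ.PosSemidef ∧ ρ.trace = 1

/-- Maximally entangled unit vector in `ℂⁿ ⊗ ℂᵐ`. -/
def MaxEntangled (n m : ℕ) (u : Fin n × Fin m → ℂ) : Prop :=
  ∃ (x : Fin (min n m) → EuclideanSpace ℂ (Fin n))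
    (y : Fin (min n m) → EuclideanSpace ℂ (Fin m)),
    Orthonormal ℂ x ∧ Orthonormal ℂ y ∧
      ∀ p : Fin n × Fin m,
        u p = (1 / Real.sqrt (min n m) : ℝ) * ∑ i, x i p.1 * y i p.2

/-- Extension `Φ ⊗ I` of a matrix map to a system with ancilla `c`. -/
def tensorExt {a b c : Type*} [Fintype a] [DecidableEq a] [Fintype c]
    (Φ : Matrix a a ℂ →ₗ[ℂ] Matrix b b ℂ)
    (X : Matrix (a × c) (a × c) ℂ) : Matrix (b × c) (b × c) ℂ :=
  Matrix.of fun p q => Φ (Matrix.of fun i j => X (i, p.2) (j, q.2)) p.1 q.1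

/-- Quantum channel: completely positive and trace preserving. -/
def IsChannel {a b : Type*} [Fintype a] [DecidableEq a] [Fintype b]
    (Φ : Matrix a a ℂ →ₗ[ℂ] Matrix b b ℂ) : Prop :=
  (∀ X, (Φ X).trace = X.trace) ∧
    ∀ (k : ℕ) (X : Matrix (a × Fin k) (a × Fin k) ℂ),
      X.PosSemidef → (tensorExt Φ X).PosSemidef

/-- Partial trace over the second tensor factor. -/
def ptraceRight {a b : Type*} [Fintype b] (M : Matrix (a × b) (a × b) ℂ) :
    Matrix a a ℂ :=
  Matrix.of fun i k => ∑ c, M (i, c) (k, c)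

/-- Partial trace over the first tensor factor. -/
def ptraceLeft {a b : Type*} [Fintype a] (M : Matrix (a × b) (a × b) ℂ) :
    Matrix b b ℂ :=
  Matrix.of fun i k => ∑ c, M (c, i) (c, k)

/-- Canonical maximally entangled state `τ = (1/d) vec(I)vec(I)*` on `a ⊗ a`. -/
noncomputable def tauGen {a : Type*} [Fintype a] [DecidableEq a] :
    Matrix (a × a) (a × a) ℂ :=
  Matrix.of fun p q =>
    (Fintype.card a : ℂ)⁻¹ * (if p.1 = p.2 then 1 else 0) * (if q.1 = q.2 then 1 else 0)

/-- The operator `τ ⊗ σ` on `a ⊗ (a ⊗ r)`. -/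
noncomputable def tauSigma {a r : Type*} [Fintype a] [DecidableEq a]
    (σ : Matrix r r ℂ) : Matrix (a × (a × r)) (a × (a × r)) ℂ :=
  Matrix.of fun p q => tauGen (p.1, p.2.1) (q.1, q.2.1) * σ p.2.2 q.2.2

/-- Fidelity of two positive semidefinite matrices. -/
noncomputable def fidelity {a : Type*} [Fintype a] [DecidableEq a]
    {P Q : Matrix a a ℂ} (hP : P.PosSemidef) (hQ : Q.PosSemidef) : ℝ :=
  traceNorm (psdSqrt hP * psdSqrt hQ)

/-! The Gram matrix of `(T ⊗ I)(uv*)` is the Kronecker product `ρ_uᵀ ⊗ σ_v` of the reduced states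
`ρ_u = tr_B (uu*)` and `σ_v = tr_A (vv*)`, so `‖(T ⊗ I)(uv*)‖₁ = tr √(ρ_uᵀ ⊗ σ_v)` is the product
of the sums of the Schmidt coefficients of `u` and `v`. For a unit vector these coefficients are
`√λᵢ`, where the `λᵢ` are at most `r = min n m` nonzero eigenvalues summing to one. The identity
`∑ (√λᵢ - 1/√r)² = 1 - (2/√r) ∑ √λᵢ + #{λᵢ ≠ 0}/r` then gives `∑ √λᵢ ≤ √r`, with equality exactly
when `r` eigenvalues equal `1/r`; reading off the eigendecomposition of `ρ_u`, this means that `u`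
has `r` equal Schmidt coefficients, i.e. is maximally entangled. -/

section PsdSqrt

variable {ι : Type*} [Fintype ι] [DecidableEq ι]

open scoped MatrixOrder in
lemma psdSqrt_eq_cfcSqrt {A : Matrix ι ι ℂ} (hA : A.PosSemidef) : psdSqrt hA = CFC.sqrt A := by
  rw [CFC.sqrt_eq_real_sqrt A (Matrix.nonneg_iff_posSemidef.mpr hA), cfcₙ_eq_cfc,
    Matrix.IsHermitian.cfc_eq hA.1, Matrix.IsHermitian.cfc, Unitary.conjStarAlgAut_apply]
  rfl

open scoped MatrixOrder in
lemma posSemidef_psdSqrt {A : Matrix ι ι ℂ} (hA : A.PosSemidef) : (psdSqrt hA).PosSemidef := by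
  rw [psdSqrt_eq_cfcSqrt]
  exact Matrix.nonneg_iff_posSemidef.mp (CFC.sqrt_nonneg A)

open scoped MatrixOrder in
lemma psdSqrt_mul_self {A : Matrix ι ι ℂ} (hA : A.PosSemidef) : psdSqrt hA * psdSqrt hA = A := by
  rw [psdSqrt_eq_cfcSqrt]
  exact CFC.sqrt_mul_sqrt_self A (Matrix.nonneg_iff_posSemidef.mpr hA)

open scoped MatrixOrder in
lemma psdSqrt_eq_of_mul_self_eq {A B : Matrix ι ι ℂ} (hA : A.PosSemidef) (hB : B.PosSemidef)
    (h : B * B = A) : psdSqrt hA = B := by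
  rw [psdSqrt_eq_cfcSqrt]
  exact CFC.sqrt_unique h (Matrix.nonneg_iff_posSemidef.mpr hB)

lemma trace_psdSqrt {A : Matrix ι ι ℂ} (hA : A.PosSemidef) :
    (psdSqrt hA).trace = ((∑ i, √(hA.1.eigenvalues i) : ℝ) : ℂ) := by
  rw [psdSqrt, Matrix.trace_mul_cycle, Unitary.coe_star_mul_self, Matrix.one_mul,
    Matrix.trace_diagonal]
  push_cast
  rfl

end PsdSqrt

section SumSqrt

open Finset

variable {ι : Type*} [Fintype ι] {p : ι → ℝ}

lemma sum_sq_sqrt_sub_inv_sqrt (hp0 : ∀ i, 0 ≤ p i) (hp1 : ∑ i, p i = 1) (r : ℕ) :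
    ∑ i with p i ≠ 0, (√(p i) - (√r)⁻¹) ^ 2
      = 1 - 2 * (√r)⁻¹ * ∑ i, √(p i) + #{i | p i ≠ 0} / r := by
  have hsqrt : ∑ i with p i ≠ 0, √(p i) = ∑ i, √(p i) :=
    sum_filter_of_ne fun i _ h hi => h (by rw [hi, Real.sqrt_zero])
  have hsum : ∑ i with p i ≠ 0, p i = 1 := by
    rw [sum_filter_ne_zero, hp1]
  simp only [sub_sq, Real.sq_sqrt (hp0 _), inv_pow, Real.sq_sqrt (Nat.cast_nonneg r),
    sum_add_distrib, sum_sub_distrib, hsum, ← sum_mul, ← mul_sum, hsqrt, sum_const, nsmul_eq_mul]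
  ring

lemma natCast_pos_of_card_support_le (hp1 : ∑ i, p i = 1) {r : ℕ} (hr : #{i | p i ≠ 0} ≤ r) :
    (0 : ℝ) < r := by
  have : #{i | p i ≠ 0} ≠ 0 := by
    intro h0
    rw [card_eq_zero, filter_eq_empty_iff] at h0
    simp_all
  exact_mod_cast (Nat.pos_of_ne_zero this).trans_le hr

lemma sum_sqrt_le_sqrt_of_card_support_le (hp0 : ∀ i, 0 ≤ p i) (hp1 : ∑ i, p i = 1) {r : ℕ}
    (hr : #{i | p i ≠ 0} ≤ r) : ∑ i, √(p i) ≤ √r := by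
  have hr0 := natCast_pos_of_card_support_le hp1 hr
  have hid := sum_sq_sqrt_sub_inv_sqrt hp0 hp1 r
  have hQ : 0 ≤ ∑ i with p i ≠ 0, (√(p i) - (√r)⁻¹) ^ 2 := sum_nonneg fun _ _ => sq_nonneg _
  have hk : (#{i | p i ≠ 0} : ℝ) / r ≤ 1 := (div_le_one hr0).2 (by exact_mod_cast hr)
  have hS : (√r)⁻¹ * ∑ i, √(p i) ≤ 1 := by linarith
  rwa [inv_mul_le_iff₀ (Real.sqrt_pos.2 hr0), mul_one] at hS

lemma card_support_eq_and_eq_inv_of_sum_sqrt_eq (hp0 : ∀ i, 0 ≤ p i) (hp1 : ∑ i, p i = 1)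
    {r : ℕ} (hr : #{i | p i ≠ 0} ≤ r) (hsum : ∑ i, √(p i) = √r) :
    #{i | p i ≠ 0} = r ∧ ∀ i, p i ≠ 0 → p i = (r : ℝ)⁻¹ := by
  have hr0 := natCast_pos_of_card_support_le hp1 hr
  have hid := sum_sq_sqrt_sub_inv_sqrt hp0 hp1 r
  have hQ0 : 0 ≤ ∑ i with p i ≠ 0, (√(p i) - (√r)⁻¹) ^ 2 := sum_nonneg fun _ _ => sq_nonneg _
  have hk_le : (#{i | p i ≠ 0} : ℝ) / r ≤ 1 := (div_le_one hr0).2 (by exact_mod_cast hr)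
  rw [hsum, mul_assoc, inv_mul_cancel₀ (Real.sqrt_pos.2 hr0).ne'] at hid
  have hQ : ∑ i with p i ≠ 0, (√(p i) - (√r)⁻¹) ^ 2 = 0 := by linarith
  have hk : (#{i | p i ≠ 0} : ℝ) / r = 1 := by linarith
  rw [div_eq_one_iff_eq hr0.ne', Nat.cast_inj] at hk
  refine ⟨hk, fun i hi => ?_⟩
  have hi0 := (sum_eq_zero_iff_of_nonneg fun _ _ => sq_nonneg _).1 hQ i (by simpa using hi)
  rw [sq_eq_zero_iff, sub_eq_zero] at hi0
  rw [← Real.sq_sqrt (hp0 i), hi0, inv_pow, Real.sq_sqrt hr0.le]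

end SumSqrt

lemma orthonormal_iff_conjTranspose_mul_self {ι κ : Type*} [DecidableEq ι] [Fintype κ]
    (x : ι → EuclideanSpace ℂ κ) :
    Orthonormal ℂ x ↔ (of fun p i => x i p)ᴴ * (of fun p i => x i p) = 1 := by
  rw [orthonormal_iff_ite, ← Matrix.ext_iff]
  refine forall₂_congr fun i j => ?_
  simp [mul_apply, PiLp.inner_apply, one_apply, mul_comm]

lemma Matrix.mul_eq_submatrix_mul_submatrix {α l k p ι : Type*} [NonUnitalNonAssocSemiring α]
    [Fintype k] [Fintype ι] (B : Matrix l k α) (D : Matrix k p α) {f : ι → k}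
    (hf : Function.Injective f) (hD : ∀ i ∉ Set.range f, D i = 0) :
    B * D = B.submatrix id f * D.submatrix f id := by
  ext x y
  simp only [mul_apply, submatrix_apply, id]
  exact (Fintype.sum_of_injective f hf _ _ (fun i hi => by simp [hD i hi]) fun _ => rfl).symm

lemma Matrix.IsHermitian.star_eigenvectorUnitary_mul_mul_conjTranspose {ι κ : Type*} [Fintype ι]
    [DecidableEq ι] [Fintype κ] {A : Matrix ι ι ℂ} (hA : A.IsHermitian) {W : Matrix ι κ ℂ}
    (h : A = W * Wᴴ) :
    (star (hA.eigenvectorUnitary : Matrix ι ι ℂ) * W) *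
        (star (hA.eigenvectorUnitary : Matrix ι ι ℂ) * W)ᴴ =
      diagonal (RCLike.ofReal ∘ hA.eigenvalues) := by
  subst h
  rw [← hA.conjStarAlgAut_star_eigenvectorUnitary, Unitary.conjStarAlgAut_apply,
    conjTranspose_mul, ← star_eq_conjTranspose, Unitary.coe_star, star_star]
  simp only [Matrix.mul_assoc]

lemma Matrix.row_eq_zero_of_mul_conjTranspose_eq_diagonal {ι κ : Type*} [DecidableEq ι]
    [Fintype κ] {D : Matrix ι κ ℂ} {d : ι → ℝ} (h : D * Dᴴ = diagonal (RCLike.ofReal ∘ d)) {i : ι}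
    (hi : d i = 0) : D i = 0 := by
  have hii := congrFun (congrFun h i) i
  rw [diagonal_apply_eq, Function.comp_apply, hi, RCLike.ofReal_zero] at hii
  exact dotProduct_self_star_eq_zero.1 hii

section Schmidt

open Finset

variable {a b : Type*} [Fintype b]

lemma ptraceRight_outer_self (w : a × b → ℂ) :
    ptraceRight (outer w w) = of (Function.curry w) * (of (Function.curry w))ᴴ := by
  ext i k
  simp [ptraceRight, outer, mul_apply]

variable [Fintype a]

lemma conjTranspose_mul_self_ptranspose_outer (u v : a × b → ℂ) :
    (ptranspose (outer u v))ᴴ * ptranspose (outer u v)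
      = (ptraceRight (outer u u))ᵀ ⊗ₖ ptraceRight (outer (v ∘ Prod.swap) (v ∘ Prod.swap)) := by
  ext ⟨k, l⟩ ⟨k', l'⟩
  simp only [mul_apply, conjTranspose_apply, kroneckerMap_apply, transpose_apply, ptraceRight,
    of_apply, ptranspose, outer, Function.comp_apply, Prod.swap_prod_mk]
  rw [sum_mul_sum, Fintype.sum_prod_type, sum_comm]
  refine sum_congr rfl fun _ _ => sum_congr rfl fun _ _ => ?_
  simp only [star_mul', star_star]
  ring

lemma posSemidef_ptraceRight_outer_self (w : a × b → ℂ) : (ptraceRight (outer w w)).PosSemidef := by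
  rw [ptraceRight_outer_self]
  exact posSemidef_self_mul_conjTranspose _

variable [DecidableEq a]

def schmidtSum (w : a × b → ℂ) : ℝ :=
  ∑ i, √((posSemidef_ptraceRight_outer_self w).1.eigenvalues i)

lemma trace_psdSqrt_ptraceRight_outer_self (w : a × b → ℂ) :
    (psdSqrt (posSemidef_ptraceRight_outer_self w)).trace = schmidtSum w :=
  trace_psdSqrt _

lemma schmidtSum_nonneg (w : a × b → ℂ) : 0 ≤ schmidtSum w :=
  sum_nonneg fun _ _ => Real.sqrt_nonneg _

lemma sum_eigenvalues_ptraceRight_outer_self {w : a × b → ℂ} (hw : ∑ p, ‖w p‖ ^ 2 = (1 : ℝ)) :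
    ∑ i, (posSemidef_ptraceRight_outer_self w).1.eigenvalues i = 1 := by
  have htrace := (posSemidef_ptraceRight_outer_self w).1.trace_eq_sum_eigenvalues
  have hnorm : (ptraceRight (outer w w)).trace = ((∑ p, ‖w p‖ ^ 2 : ℝ) : ℂ) := by
    simp [trace, ptraceRight, outer, Fintype.sum_prod_type, Complex.mul_conj,
      Complex.normSq_eq_norm_sq]
  rw [hnorm, hw] at htrace
  exact_mod_cast (congrArg Complex.re htrace).symm

lemma card_eigenvalues_ptraceRight_outer_self_ne_zero_le (w : a × b → ℂ) :
    #{i | (posSemidef_ptraceRight_outer_self w).1.eigenvalues i ≠ 0}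
      ≤ min (Fintype.card a) (Fintype.card b) := by
  rw [← Fintype.card_subtype, ← IsHermitian.rank_eq_card_non_zero_eigs, ptraceRight_outer_self,
    rank_self_mul_conjTranspose]
  exact le_min (rank_le_card_height _) (rank_le_card_width _)

lemma schmidtSum_le_sqrt {w : a × b → ℂ} (hw : ∑ p, ‖w p‖ ^ 2 = (1 : ℝ)) :
    schmidtSum w ≤ √(min (Fintype.card a) (Fintype.card b) : ℕ) :=
  sum_sqrt_le_sqrt_of_card_support_le (posSemidef_ptraceRight_outer_self w).eigenvalues_nonneg
    (sum_eigenvalues_ptraceRight_outer_self hw)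
    (card_eigenvalues_ptraceRight_outer_self_ne_zero_le w)

lemma traceNorm_ptranspose_outer [DecidableEq b] (u v : a × b → ℂ) :
    traceNorm (ptranspose (outer u v)) = schmidtSum u * schmidtSum (v ∘ Prod.swap) := by
  have hu := posSemidef_ptraceRight_outer_self u
  have hv := posSemidef_ptraceRight_outer_self (v ∘ Prod.swap)
  have hsqrt : psdSqrt (posSemidef_conjTranspose_mul_self (ptranspose (outer u v)))
      = (psdSqrt hu)ᵀ ⊗ₖ psdSqrt hv := by
    refine psdSqrt_eq_of_mul_self_eq _
      ((posSemidef_psdSqrt hu).transpose.kronecker (posSemidef_psdSqrt hv)) ?_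
    rw [← mul_kronecker_mul, ← transpose_mul, psdSqrt_mul_self, psdSqrt_mul_self,
      conjTranspose_mul_self_ptranspose_outer]
  rw [traceNorm, hsqrt, trace_kronecker, trace_transpose, trace_psdSqrt_ptraceRight_outer_self,
    trace_psdSqrt_ptraceRight_outer_self, ← Complex.ofReal_mul, Complex.ofReal_re]

end Schmidt

section MaxEntangled

open Finset

variable {n m : ℕ}

lemma maxEntangled_iff_exists_isometry (w : Fin n × Fin m → ℂ) :
    MaxEntangled n m w ↔ ∃ (X : Matrix (Fin n) (Fin (min n m)) ℂ)
      (Y : Matrix (Fin m) (Fin (min n m)) ℂ), Xᴴ * X = 1 ∧ Yᴴ * Y = 1 ∧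
        of (Function.curry w) = ((√(min n m : ℕ) : ℝ) : ℂ)⁻¹ • (X * Yᵀ) := by
  constructor
  · rintro ⟨x, y, hx, hy, hw⟩
    refine ⟨of fun p i => x i p, of fun q i => y i q,
      (orthonormal_iff_conjTranspose_mul_self x).1 hx,
      (orthonormal_iff_conjTranspose_mul_self y).1 hy, ?_⟩
    ext p q
    simp [hw (p, q), mul_apply]
  · rintro ⟨X, Y, hX, hY, hw⟩
    refine ⟨fun i => WithLp.toLp 2 fun p => X p i, fun i => WithLp.toLp 2 fun q => Y q i,
      (orthonormal_iff_conjTranspose_mul_self _).2 hX,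
      (orthonormal_iff_conjTranspose_mul_self _).2 hY, fun p => ?_⟩
    simpa [mul_apply] using congrFun (congrFun hw p.1) p.2

lemma maxEntangled_comp_swap {w : Fin n × Fin m → ℂ} (h : MaxEntangled n m w) :
    MaxEntangled m n (w ∘ Prod.swap) := by
  obtain ⟨x, y, hx, hy, hw⟩ := h
  let e := finCongr (Nat.min_comm m n)
  refine ⟨y ∘ e, x ∘ e, hy.comp _ e.injective, hx.comp _ e.injective, fun p => ?_⟩
  rw [Function.comp_apply, hw, min_comm (m : ℝ), ← e.sum_comp]
  simp only [Prod.fst_swap, Prod.snd_swap, Function.comp_apply, mul_comm]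

lemma maxEntangled_comp_swap_iff {w : Fin n × Fin m → ℂ} :
    MaxEntangled m n (w ∘ Prod.swap) ↔ MaxEntangled n m w :=
  ⟨maxEntangled_comp_swap, maxEntangled_comp_swap⟩

lemma schmidtSum_eq_sqrt_of_maxEntangled {w : Fin n × Fin m → ℂ} (h : MaxEntangled n m w) :
    schmidtSum w = √(min n m : ℕ) := by
  obtain ⟨X, Y, hX, hY, hw⟩ := (maxEntangled_iff_exists_isometry w).1 h
  set c : ℝ := (√(min n m : ℕ))⁻¹
  have hYY : Yᵀ * Yᵀᴴ = 1 := by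
    rw [transpose_conjTranspose, ← conjTranspose_transpose, ← transpose_mul, hY, transpose_one]
  have hρ : ptraceRight (outer w w) = ((c * c : ℝ) : ℂ) • (X * Xᴴ) := by
    rw [ptraceRight_outer_self, hw, conjTranspose_smul, conjTranspose_mul, Complex.star_def,
      ← Complex.ofReal_inv, Complex.conj_ofReal, Matrix.smul_mul, Matrix.mul_smul, smul_smul,
      Matrix.mul_assoc, ← Matrix.mul_assoc Yᵀ, hYY, Matrix.one_mul, Complex.ofReal_mul]
  have hsqrt : psdSqrt (posSemidef_ptraceRight_outer_self w) = (c : ℂ) • (X * Xᴴ) := by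
    refine psdSqrt_eq_of_mul_self_eq _
      ((posSemidef_self_mul_conjTranspose X).smul (Complex.zero_le_real.2 (by positivity))) ?_
    rw [hρ, Matrix.smul_mul, Matrix.mul_smul, smul_smul, Matrix.mul_assoc, ← Matrix.mul_assoc Xᴴ,
      hX, Matrix.one_mul, Complex.ofReal_mul]
  have htrace := trace_psdSqrt_ptraceRight_outer_self w
  rw [hsqrt, trace_smul, trace_mul_comm, hX, trace_one, Fintype.card_fin, smul_eq_mul,
    ← Complex.ofReal_natCast, ← Complex.ofReal_mul, Complex.ofReal_inj] at htrace
  rw [← htrace, inv_mul_eq_div, Real.div_sqrt]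

lemma maxEntangled_of_eigenvalues {w : Fin n × Fin m → ℂ}
    (hcard : #{i | (posSemidef_ptraceRight_outer_self w).1.eigenvalues i ≠ 0} = min n m)
    (hval : ∀ i, (posSemidef_ptraceRight_outer_self w).1.eigenvalues i ≠ 0 →
      (posSemidef_ptraceRight_outer_self w).1.eigenvalues i = ((min n m : ℕ) : ℝ)⁻¹)
    (hr : 0 < min n m) : MaxEntangled n m w := by
  set hρ := (posSemidef_ptraceRight_outer_self w).1
  set r : ℝ := ((min n m : ℕ) : ℝ)
  have hr0 : 0 < r := Nat.cast_pos.2 hr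
  have hsqrt : 0 < √r := Real.sqrt_pos.2 hr0
  set U : Matrix (Fin n) (Fin n) ℂ := ↑hρ.eigenvectorUnitary
  have hU : U * star U = 1 := Unitary.coe_mul_star_self _
  set D := star U * of (Function.curry w)
  set f := ((univ.filter fun i => hρ.eigenvalues i ≠ 0).orderEmbOfFin hcard).toEmbedding
  have hsupp : ∀ i, hρ.eigenvalues i ≠ 0 ↔ i ∈ Set.range f := by
    simp [f, range_orderEmbOfFin]
  have hDD : D * Dᴴ = diagonal (RCLike.ofReal ∘ hρ.eigenvalues) :=
    hρ.star_eigenvectorUnitary_mul_mul_conjTranspose (ptraceRight_outer_self w)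
  have hD : ∀ i ∉ Set.range f, D i = 0 := fun i hi =>
    row_eq_zero_of_mul_conjTranspose_eq_diagonal hDD (not_not.1 ((hsupp i).not.2 hi))
  set Z := D.submatrix f id
  have hZZ : Z * Zᴴ = (r : ℂ)⁻¹ • 1 := by
    rw [conjTranspose_submatrix, ← submatrix_mul _ _ _ _ _ Function.bijective_id, hDD,
      submatrix_diagonal_embedding, smul_one_eq_diagonal]
    congr 1
    funext j
    simp [hval (f j) ((hsupp _).2 ⟨j, rfl⟩), r]
  rw [maxEntangled_iff_exists_isometry]
  refine ⟨U.submatrix id f, (√r : ℂ) • Zᵀ, ?_, ?_, ?_⟩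
  · rw [conjTranspose_submatrix, ← submatrix_mul _ _ _ _ _ Function.bijective_id,
      ← star_eq_conjTranspose, Unitary.coe_star_mul_self, submatrix_one_embedding]
  · rw [conjTranspose_smul, Matrix.smul_mul, Matrix.mul_smul, smul_smul, transpose_conjTranspose,
      ← conjTranspose_transpose, ← transpose_mul, hZZ, transpose_smul, transpose_one, smul_smul,
      Complex.star_def, Complex.conj_ofReal, ← Complex.ofReal_mul, Real.mul_self_sqrt hr0.le,
      mul_inv_cancel₀ (Complex.ofReal_ne_zero.2 hr0.ne'), one_smul]
  · rw [transpose_smul, transpose_transpose, Matrix.mul_smul, smul_smul, ← Complex.ofReal_inv,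
      ← Complex.ofReal_mul, inv_mul_cancel₀ hsqrt.ne', Complex.ofReal_one, one_smul,
      ← mul_eq_submatrix_mul_submatrix _ _ f.injective hD, ← Matrix.mul_assoc,
      hU, Matrix.one_mul]

lemma schmidtSum_eq_sqrt_iff {w : Fin n × Fin m → ℂ} (hw : ∑ p, ‖w p‖ ^ 2 = (1 : ℝ)) :
    schmidtSum w = √(min n m : ℕ) ↔ MaxEntangled n m w := by
  refine ⟨fun h => ?_, schmidtSum_eq_sqrt_of_maxEntangled⟩
  have hp0 := (posSemidef_ptraceRight_outer_self w).eigenvalues_nonneg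
  have hp1 := sum_eigenvalues_ptraceRight_outer_self hw
  have hcard := card_eigenvalues_ptraceRight_outer_self_ne_zero_le w
  simp only [Fintype.card_fin] at hcard
  obtain ⟨hcard_eq, hval⟩ := card_support_eq_and_eq_inv_of_sum_sqrt_eq hp0 hp1 hcard h
  exact maxEntangled_of_eigenvalues hcard_eq hval
    (Nat.cast_pos.1 (natCast_pos_of_card_support_le hp1 hcard))

end MaxEntangled

/-- For unit vectors `u, v` in `ℂⁿ ⊗ ℂᵐ`, `‖(T ⊗ I)(uv*)‖₁ ≤ min n m`, with equality
iff both `u` and `v` are maximally entangled. -/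
theorem stmt2 (n m : ℕ) (u v : Fin n × Fin m → ℂ)
    (hu : ∑ p, ‖u p‖ ^ 2 = (1 : ℝ)) (hv : ∑ p, ‖v p‖ ^ 2 = (1 : ℝ)) :
    traceNorm (ptranspose (outer u v)) ≤ (min n m : ℕ) ∧
    (traceNorm (ptranspose (outer u v)) = (min n m : ℕ) ↔
      MaxEntangled n m u ∧ MaxEntangled n m v) := by
  have hv' : ∑ p, ‖(v ∘ Prod.swap) p‖ ^ 2 = (1 : ℝ) := by
    rw [← hv, ← (Equiv.prodComm (Fin n) (Fin m)).sum_comp]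
    rfl
  have hu_le := schmidtSum_le_sqrt hu
  have hv_le := schmidtSum_le_sqrt hv'
  have hu0 := schmidtSum_nonneg u
  have hv0 := schmidtSum_nonneg (v ∘ Prod.swap)
  simp only [Fintype.card_fin, Nat.min_comm m n] at hu_le hv_le
  have hn : 0 < n := Nat.pos_of_ne_zero (by rintro rfl; simp at hu)
  have hm : 0 < m := Nat.pos_of_ne_zero (by rintro rfl; simp at hu)
  have hs : 0 < √(min n m : ℕ) := Real.sqrt_pos.2 (Nat.cast_pos.2 (lt_min hn hm))
  rw [traceNorm_ptranspose_outer, ← Real.mul_self_sqrt (Nat.cast_nonneg (min n m)),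
    ← schmidtSum_eq_sqrt_iff hu, ← maxEntangled_comp_swap_iff, ← schmidtSum_eq_sqrt_iff hv',
    Nat.min_comm m n]
  refine ⟨mul_le_mul hu_le hv_le hv0 hs.le, fun h => ⟨?_, ?_⟩, fun h => by rw [h.1, h.2]⟩
  · nlinarith
  · nlinarith
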